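/- For all integers k ≥ 1 and n ≥ 1: every k-box path of size n is of the form U^{a_1} D^k L D U^{a_2} D^k L D ⋯ U^{a_{n−1}} D^k L D U^{a_n} D^k L for some positive integers a_1, …, a_n. Conversely, any word of this form with positive integers a_1, …, a_n satisfying a_1 + a_2 + ⋯ + a_n = (k+2)n − 1, and such that no prefix of the word contains fewer U's than the total number of D's and L's, is a k-box path of size n. -/

import Mathlib

/-- The step alphabet for skew Dyck paths: up, down, left. -/
inductive Step : Type
  | U | D | L
  deriving DecidableEq

/-- Number of U steps in a word. -/
def countU (w : List Step) : ℕ := w.count Step.U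
/-- Number of D steps in a word. -/
def countD (w : List Step) : ℕ := w.count Step.D
/-- Number of L steps in a word. -/
def countL (w : List Step) : ℕ := w.count Step.L

/-- A skew Dyck path: every prefix has at least as many U's as D's and L's combined,
the totals balance, and there is no factor `UL` or `LU`. -/
def IsSkewDyck (w : List Step) : Prop :=
  (∀ p, p <+: w → countD p + countL p ≤ countU p) ∧
  countU w = countD w + countL w ∧
  ¬ [Step.U, Step.L] <:+: w ∧ ¬ [Step.L, Step.U] <:+: w

/-- The semilength of a skew Dyck path is its number of U's. -/
def semilength (w : List Step) : ℕ := countU w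

/-- The factor `U D^k L`. -/
def boxFactor (k : ℕ) : List Step := Step.U :: (List.replicate k Step.D ++ [Step.L])

/-- The number of occurrences (starting positions) of `f` as a factor (contiguous
subword) of `w`. -/
def numOccurrences (f w : List Step) : ℕ :=
  ((Finset.range (w.length + 1)).filter (fun i => f <+: w.drop i)).card

/-- A `k`-box path of size `n`: a skew Dyck path of semilength `(k+2)n - 1` with
exactly `n` occurrences of the factor `U D^k L`. -/
def IsBoxPath (k n : ℕ) (w : List Step) : Prop :=
  IsSkewDyck w ∧ semilength w = (k+2)*n - 1 ∧ numOccurrences (boxFactor k) w = n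

/-- Number of returns: positions `i` such that the `(i+1)`-st letter is a `D` or `L`
and the prefix of length `i+1` is balanced (the path returns to the x-axis). -/
def numReturns (w : List Step) : ℕ :=
  ((Finset.range w.length).filter (fun i =>
    (w[i]? = some Step.D ∨ w[i]? = some Step.L) ∧
    countU (w.take (i+1)) = countD (w.take (i+1)) + countL (w.take (i+1)))).card

/-- Number of long ascents: maximal runs of consecutive U's of length at least 2,
counted via their starting positions. -/
def numLongAscents (w : List Step) : ℕ :=
  ((Finset.range w.length).filter (fun i =>
    w[i]? = some Step.U ∧ w[i+1]? = some Step.U ∧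
    (i = 0 ∨ w[i-1]? ≠ some Step.U))).card

/-- The word `U^{a_1} D^k L D U^{a_2} D^k L D ⋯ U^{a_{n-1}} D^k L D U^{a_n} D^k L`. -/
def boxForm (k : ℕ) : List ℕ → List Step
  | [] => []
  | [a] => List.replicate a Step.U ++ List.replicate k Step.D ++ [Step.L]
  | a :: b :: rest =>
      List.replicate a Step.U ++ List.replicate k Step.D ++ [Step.L, Step.D] ++
        boxForm k (b :: rest)

/-- A block `U^b D^{k-1} L D` of an augmented `k`-Dyck path. -/
def augBlock (k b : ℕ) : List Step :=
  List.replicate b Step.U ++ List.replicate (k-1) Step.D ++ [Step.L, Step.D]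

/-- The word `U^{b_1} D^{k-1} L D ⋯ U^{b_m} D^{k-1} L D`. -/
def augForm (k : ℕ) (b : List ℕ) : List Step := (b.map (augBlock k)).flatten

/-- An augmented `k`-Dyck path: a skew Dyck path of the form
`U^{b_1} D^{k-1} L D ⋯ U^{b_m} D^{k-1} L D` with all `b_i` positive. -/
def IsAugmented (k : ℕ) (w : List Step) : Prop :=
  IsSkewDyck w ∧ ∃ b : List ℕ, (∀ x ∈ b, 0 < x) ∧ w = augForm k b

/-- An augmented `k`-Dyck path of size `m`. -/
def IsAugmentedOfSize (k m : ℕ) (w : List Step) : Prop :=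
  IsSkewDyck w ∧ ∃ b : List ℕ, b.length = m ∧ (∀ x ∈ b, 0 < x) ∧ w = augForm k b

/-- A tailed `k`-box path ends with the factor `U^{k+1} D^k L`. -/
def Tailed (k : ℕ) (w : List Step) : Prop :=
  (List.replicate (k+1) Step.U ++ List.replicate k Step.D ++ [Step.L]) <:+ w

/-!
Every occurrence of `U D^k L` accounts for `k + 1` down or left steps, and since `LU` is
forbidden, two consecutive occurrences are separated by at least one more such step. So a word
without `LU` and with `m ≥ 1` occurrences has at least `(k + 2) m - 1` down and left steps, which
is exactly the number in a `k`-box path of size `m`. In the equality case every down or left step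
is accounted for, and this forces the shape `U^{a_1} D^k L D ⋯ U^{a_m} D^k L`. Conversely, in a
word of this shape each block yields an occurrence, and the same bound rules out any other.
-/

open List

theorem numOccurrences_cons (f : List Step) (c : Step) (w : List Step) :
    numOccurrences f (c :: w) = (if f <+: c :: w then 1 else 0) + numOccurrences f w := by
  simp only [numOccurrences, Finset.card_filter, length_cons]
  rw [Finset.sum_range_succ']
  simp only [drop_succ_cons, drop_zero]
  omega

theorem numOccurrences_nil {f : List Step} (hf : f ≠ []) : numOccurrences f [] = 0 := by
  simp [numOccurrences, hf]

theorem numOccurrences_le_append (f x w : List Step) :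
    numOccurrences f w ≤ numOccurrences f (x ++ w) := by
  induction x with
  | nil => rfl
  | cons c x ih => rw [cons_append, numOccurrences_cons]; omega

theorem numOccurrences_cons_of_ne {c c₀ : Step} (h : c ≠ c₀) (f w : List Step) :
    numOccurrences (c₀ :: f) (c :: w) = numOccurrences (c₀ :: f) w := by
  rw [numOccurrences_cons, if_neg (fun hp => h (cons_prefix_cons.1 hp).1.symm), zero_add]

theorem numOccurrences_append_of_notMem {c₀ : Step} {x : List Step} (hx : c₀ ∉ x)
    (f w : List Step) : numOccurrences (c₀ :: f) (x ++ w) = numOccurrences (c₀ :: f) w := by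
  induction x with
  | nil => rfl
  | cons c x ih =>
    rw [mem_cons, not_or] at hx
    rw [cons_append, numOccurrences_cons_of_ne (Ne.symm hx.1), ih hx.2]

theorem numOccurrences_boxFactor_append (k : ℕ) (w : List Step) :
    numOccurrences (boxFactor k) (boxFactor k ++ w) = numOccurrences (boxFactor k) w + 1 := by
  have hpre : boxFactor k <+: boxFactor k ++ w := prefix_append _ _
  simp only [boxFactor, cons_append] at hpre ⊢
  rw [numOccurrences_cons, if_pos hpre, numOccurrences_append_of_notMem (by simp)]
  omega

theorem countD_add_countL_cons_of_ne {c : Step} (hc : c ≠ Step.U) (w : List Step) :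
    countD (c :: w) + countL (c :: w) = countD w + countL w + 1 := by
  cases c <;> simp_all [countD, countL] <;> omega

theorem countD_add_countL_boxFactor_append (k : ℕ) (w : List Step) :
    countD (boxFactor k ++ w) + countL (boxFactor k ++ w) = countD w + countL w + (k + 1) := by
  simp [boxFactor, countD, countL, count_replicate]
  omega

theorem numOccurrences_boxFactor_cons_of_ne (k : ℕ) {c : Step} (hc : c ≠ Step.U)
    (w : List Step) :
    numOccurrences (boxFactor k) (c :: w) = numOccurrences (boxFactor k) w :=
  numOccurrences_cons_of_ne hc _ _

theorem boxForm_succ_cons (k x : ℕ) (xs : List ℕ) :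
    boxForm k ((x + 1) :: xs) = Step.U :: boxForm k (x :: xs) := by
  rcases xs with _ | ⟨y, ys⟩ <;> simp [boxForm, replicate_succ]

theorem boxForm_one (k : ℕ) : boxForm k [1] = boxFactor k := by
  simp [boxForm, boxFactor]

theorem boxForm_one_cons (k y : ℕ) (ys : List ℕ) :
    boxForm k (1 :: y :: ys) = boxFactor k ++ Step.D :: boxForm k (y :: ys) := by
  simp [boxForm, boxFactor]

theorem ne_U_of_boxFactor_append_cons (k : ℕ) {c : Step} {w : List Step}
    (hw : ¬ [Step.L, Step.U] <:+: boxFactor k ++ c :: w) : c ≠ Step.U := by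
  rintro rfl
  exact hw ⟨Step.U :: replicate k Step.D, w, by simp [boxFactor]⟩

theorem mul_numOccurrences_boxFactor_le (k : ℕ) : ∀ w : List Step,
    ¬ [Step.L, Step.U] <:+: w →
    (k + 2) * numOccurrences (boxFactor k) w ≤ countD w + countL w + 1
  | [], _ => by simp [numOccurrences_nil, boxFactor]
  | c :: u, hw => by
    by_cases hbox : boxFactor k <+: c :: u
    · obtain ⟨_ | ⟨c', u'⟩, hv⟩ := hbox
      · rw [← hv, numOccurrences_boxFactor_append, countD_add_countL_boxFactor_append,
          numOccurrences_nil (by simp [boxFactor])]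
        simp [countD, countL]
      · rw [← hv] at hw ⊢
        have hc := ne_U_of_boxFactor_append_cons k hw
        have hu := mul_numOccurrences_boxFactor_le k u'
          fun h => hw (h.trans (IsSuffix.isInfix ⟨boxFactor k ++ [c'], by simp⟩))
        rw [numOccurrences_boxFactor_append, countD_add_countL_boxFactor_append, Nat.mul_add_one,
          numOccurrences_boxFactor_cons_of_ne k hc, countD_add_countL_cons_of_ne hc]
        omega
    · have hu := mul_numOccurrences_boxFactor_le k u fun h => hw (infix_cons h)
      have hcount : countD u + countL u ≤ countD (c :: u) + countL (c :: u) := by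
        cases c <;> simp [countD, countL]
      rw [numOccurrences_cons, if_neg hbox, zero_add]
      omega
termination_by w => w.length
decreasing_by
  · have := congrArg length hv
    simp [boxFactor] at this ⊢
    omega
  · simp

theorem exists_eq_boxForm_of_mul_numOccurrences_eq (k : ℕ) : ∀ w : List Step,
    ¬ [Step.L, Step.U] <:+: w →
    (k + 2) * numOccurrences (boxFactor k) w = countD w + countL w + 1 →
    ∃ a : List ℕ, a.length = numOccurrences (boxFactor k) w ∧ (∀ x ∈ a, 0 < x) ∧
      w = boxForm k a
  | [], _, heq => by simp [numOccurrences_nil, boxFactor, countD, countL] at heq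
  | c :: u, hw, heq => by
    by_cases hbox : boxFactor k <+: c :: u
    · obtain ⟨_ | ⟨c', u'⟩, hv⟩ := hbox
      · refine ⟨[1], ?_, by simp, by rw [← hv, append_nil, boxForm_one]⟩
        rw [← hv, numOccurrences_boxFactor_append, numOccurrences_nil (by simp [boxFactor])]
        rfl
      · rw [← hv] at hw heq ⊢
        have hc := ne_U_of_boxFactor_append_cons k hw
        rw [numOccurrences_boxFactor_append, countD_add_countL_boxFactor_append, Nat.mul_add_one,
          numOccurrences_boxFactor_cons_of_ne k hc, countD_add_countL_cons_of_ne hc] at heq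
        rw [numOccurrences_boxFactor_append, numOccurrences_boxFactor_cons_of_ne k hc]
        obtain ⟨b, hb, hbpos, rfl⟩ := exists_eq_boxForm_of_mul_numOccurrences_eq k u'
          (fun h => hw (h.trans (IsSuffix.isInfix ⟨boxFactor k ++ [c'], by simp⟩))) (by omega)
        obtain ⟨y, ys, rfl⟩ : ∃ y ys, b = y :: ys := exists_cons_of_ne_nil <| by
          rintro rfl
          simp [boxForm, numOccurrences_nil, boxFactor, countD, countL] at heq
        obtain ⟨y, rfl⟩ := Nat.exists_eq_add_one.2 (hbpos _ mem_cons_self)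
        obtain rfl : c' = Step.D := by
          cases c'
          · exact absurd rfl hc
          · rfl
          · exact absurd ⟨boxFactor k, boxForm k (y :: ys), by simp [boxForm_succ_cons]⟩ hw
        exact ⟨1 :: (y + 1) :: ys, by simp [hb], forall_mem_cons.2 ⟨one_pos, hbpos⟩,
          (boxForm_one_cons k _ _).symm⟩
    · have hu := mul_numOccurrences_boxFactor_le k u fun h => hw (infix_cons h)
      rw [numOccurrences_cons, if_neg hbox, zero_add] at heq ⊢
      obtain rfl : c = Step.U := by
        by_contra hc
        rw [countD_add_countL_cons_of_ne hc] at heq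
        omega
      obtain ⟨b, hb, hbpos, rfl⟩ := exists_eq_boxForm_of_mul_numOccurrences_eq k u
        (fun h => hw (infix_cons h)) (by simpa [countD, countL] using heq)
      obtain ⟨y, ys, rfl⟩ : ∃ y ys, b = y :: ys := exists_cons_of_ne_nil <| by
        rintro rfl
        simp [boxForm, numOccurrences_nil, boxFactor, countD, countL] at heq
      exact ⟨(y + 1) :: ys, by simpa using hb,
        forall_mem_cons.2 ⟨y.succ_pos, fun x hx => hbpos x (mem_cons_of_mem _ hx)⟩,
        (boxForm_succ_cons k y ys).symm⟩
termination_by w => w.length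
decreasing_by
  · have := congrArg length hv
    simp [boxFactor] at this ⊢
    omega
  · simp

theorem List.IsChain.rel_of_pair_infix {α : Type*} {R : α → α → Prop} {l : List α}
    {x y : α} (hl : IsChain R l) (hxy : [x, y] <:+: l) : R x y :=
  isChain_pair.1 (hl.infix hxy)

def SkewAdmissible (x y : Step) : Prop :=
  ¬(x = Step.U ∧ y = Step.L) ∧ ¬(x = Step.L ∧ y = Step.U)

theorem isChain_replicate_append {α : Type*} {R : α → α → Prop} {c : α} (hc : R c c)
    {l : List α} (hl : IsChain R l) (hcl : ∀ y ∈ l.head?, R c y) (n : ℕ) :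
    IsChain R (replicate n c ++ l) := by
  induction n with
  | zero => exact hl
  | succ n ih =>
    rw [replicate_succ, cons_append, isChain_cons]
    refine ⟨?_, ih⟩
    cases n <;> simp_all [replicate_succ]

theorem isChain_boxForm {k : ℕ} (hk : 1 ≤ k) :
    ∀ a : List ℕ, (∀ x ∈ a, 0 < x) → IsChain SkewAdmissible (boxForm k a)
  | [], _ => isChain_nil
  | [x], h => by
    obtain ⟨x, rfl⟩ := Nat.exists_eq_add_one.2 (h _ mem_cons_self)
    obtain ⟨k, rfl⟩ := Nat.exists_eq_add_one.2 hk
    simp only [boxForm, append_assoc]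
    refine isChain_replicate_append (by simp [SkewAdmissible]) ?_
      (by simp [SkewAdmissible, replicate_succ]) _
    exact isChain_replicate_append (by simp [SkewAdmissible]) (isChain_singleton _)
      (by simp [SkewAdmissible]) _
  | x :: y :: ys, h => by
    have ih := isChain_boxForm hk (y :: ys) fun z hz => h z (mem_cons_of_mem _ hz)
    obtain ⟨y, rfl⟩ := Nat.exists_eq_add_one.2 (h y (by simp))
    obtain ⟨k, rfl⟩ := Nat.exists_eq_add_one.2 hk
    rw [boxForm_succ_cons] at ih
    simp only [boxForm, append_assoc]
    refine isChain_replicate_append (by simp [SkewAdmissible]) ?_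
      (by simp [SkewAdmissible, replicate_succ]) _
    refine isChain_replicate_append (by simp [SkewAdmissible]) ?_ (by simp [SkewAdmissible]) _
    rw [boxForm_succ_cons]
    simp [SkewAdmissible, ih]

theorem countU_boxForm (k : ℕ) : ∀ a : List ℕ, countU (boxForm k a) = a.sum
  | [] => rfl
  | [x] => by simp [boxForm, countU, count_replicate]
  | x :: y :: ys => by
    have ih := countU_boxForm k (y :: ys)
    simp_all [boxForm, countU, count_replicate]

theorem countD_add_countL_boxForm (k : ℕ) :
    ∀ a : List ℕ, a ≠ [] →
      countD (boxForm k a) + countL (boxForm k a) + 1 = (k + 2) * a.length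
  | [], h => absurd rfl h
  | [x], _ => by simp [boxForm, countD, countL, count_replicate]
  | x :: y :: ys, _ => by
    have ih := countD_add_countL_boxForm k (y :: ys) (cons_ne_nil _ _)
    have hstep : countD (boxForm k (x :: y :: ys)) + countL (boxForm k (x :: y :: ys)) =
        countD (boxForm k (y :: ys)) + countL (boxForm k (y :: ys)) + (k + 2) := by
      simp [boxForm, countD, countL, count_replicate]
      omega
    rw [hstep, length_cons, Nat.mul_add_one, ← ih]
    omega

theorem numOccurrences_boxForm_one_cons_le (k x : ℕ) (xs : List ℕ) :
    numOccurrences (boxFactor k) (boxForm k (1 :: xs)) ≤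
      numOccurrences (boxFactor k) (boxForm k ((x + 1) :: xs)) := by
  induction x with
  | zero => rfl
  | succ x ih =>
    rw [boxForm_succ_cons k (x + 1)]
    exact ih.trans (numOccurrences_le_append _ [Step.U] _)

theorem length_le_numOccurrences_boxForm (k : ℕ) :
    ∀ a : List ℕ, (∀ x ∈ a, 0 < x) →
      a.length ≤ numOccurrences (boxFactor k) (boxForm k a)
  | [], _ => Nat.zero_le _
  | x :: xs, h => by
    obtain ⟨x, rfl⟩ := Nat.exists_eq_add_one.2 (h _ mem_cons_self)
    refine le_trans ?_ (numOccurrences_boxForm_one_cons_le k x xs)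
    rcases xs with _ | ⟨y, ys⟩
    · have h1 := numOccurrences_boxFactor_append k []
      rw [append_nil] at h1
      simp [boxForm_one, h1]
    · have ih := length_le_numOccurrences_boxForm k (y :: ys)
        fun z hz => h z (mem_cons_of_mem _ hz)
      rw [boxForm_one_cons, numOccurrences_boxFactor_append, length_cons]
      exact Nat.succ_le_succ (ih.trans (numOccurrences_le_append _ [Step.D] _))

theorem numOccurrences_boxFactor_boxForm {k : ℕ} (hk : 1 ≤ k) {a : List ℕ}
    (ha : ∀ x ∈ a, 0 < x) : numOccurrences (boxFactor k) (boxForm k a) = a.length := by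
  rcases eq_or_ne a [] with rfl | hne
  · simp [boxForm, numOccurrences_nil, boxFactor]
  have hLU : ¬ [Step.L, Step.U] <:+: boxForm k a :=
    fun h => ((isChain_boxForm hk a ha).rel_of_pair_infix h).2 ⟨rfl, rfl⟩
  have hupper := mul_numOccurrences_boxFactor_le k _ hLU
  rw [countD_add_countL_boxForm k a hne] at hupper
  exact le_antisymm (Nat.le_of_mul_le_mul_left hupper (by omega))
    (length_le_numOccurrences_boxForm k a ha)

/-- Structure of `k`-box paths: every `k`-box path of size `n` is of the form
`U^{a_1} D^k L D ⋯ U^{a_{n-1}} D^k L D U^{a_n} D^k L` with positive `a_i`;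
conversely any word of this form with `a_1 + ⋯ + a_n = (k+2)n - 1` satisfying the
prefix condition is a `k`-box path of size `n`. -/
theorem statement1 (k n : ℕ) (hk : 1 ≤ k) (hn : 1 ≤ n) :
    (∀ w : List Step, IsBoxPath k n w →
      ∃ a : List ℕ, a.length = n ∧ (∀ x ∈ a, 0 < x) ∧ w = boxForm k a) ∧
    (∀ a : List ℕ, a.length = n → (∀ x ∈ a, 0 < x) → a.sum = (k+2)*n - 1 →
      (∀ p, p <+: boxForm k a → countD p + countL p ≤ countU p) →
      IsBoxPath k n (boxForm k a)) := by
  have hpos : 1 ≤ (k + 2) * n := Nat.mul_pos (by omega) hn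
  constructor
  · rintro w ⟨⟨-, hbal, -, hLU⟩, hsem, hocc⟩
    rw [semilength] at hsem
    obtain ⟨a, ha, hapos, rfl⟩ :=
      exists_eq_boxForm_of_mul_numOccurrences_eq k w hLU (by rw [hocc]; omega)
    exact ⟨a, ha.trans hocc, hapos, rfl⟩
  · intro a hlen hapos hsum hpre
    have hne : a ≠ [] := by rintro rfl; simp at hlen; omega
    have hchain := isChain_boxForm hk a hapos
    have hcount := countD_add_countL_boxForm k a hne
    refine ⟨⟨hpre, ?_, fun h => (hchain.rel_of_pair_infix h).1 ⟨rfl, rfl⟩,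
      fun h => (hchain.rel_of_pair_infix h).2 ⟨rfl, rfl⟩⟩, ?_, ?_⟩
    · rw [countU_boxForm, hsum, ← hlen]
      omega
    · rw [semilength, countU_boxForm, hsum]
    · rw [numOccurrences_boxFactor_boxForm hk hapos, hlen]
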